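/- arXiv:2506.14797 — 3 statements merged into one kernel-verified Lean document; each statement's English description precedes it below -/
import Mathlib

section
/- For any x ∈ [0,1] and any natural number n ≥ 1, the identity ∑_{j=1}^{n} C(n,j)·(1/j)·x^j·(1-x)^{n-j} = ∑_{j=1}^{n} ((1-x)^{n-j} - (1-x)^n)/j holds. -/
-- Auxiliary: expansion of 1 = (x + (1-x))^n restricted to j ≥ 1.
lemma aux_binom (x : ℝ) (n : ℕ) :
    ∑ j ∈ Finset.Icc 1 n, (n.choose j : ℝ) * x ^ j * (1 - x) ^ (n - j)
      = 1 - (1 - x) ^ n := by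
  have h := add_pow x (1 - x) n
  rw [show x + (1 - x) = 1 by ring, one_pow] at h
  have hr : Finset.range (n + 1) = insert 0 (Finset.Icc 1 n) := by
    ext k
    simp [Finset.mem_range, Finset.mem_Icc]
    omega
  rw [hr, Finset.sum_insert (by simp)] at h
  simp only [pow_zero, Nat.sub_zero, Nat.choose_zero_right, Nat.cast_one, one_mul, mul_one] at h
  have := h
  rw [eq_comm] at this
  have : ∑ j ∈ Finset.Icc 1 n, x ^ j * (1 - x) ^ (n - j) * (n.choose j : ℝ)
      = 1 - (1 - x) ^ n := by linarith
  rw [← this]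
  apply Finset.sum_congr rfl
  intro j _
  ring

lemma aux_choose (n j : ℕ) (hj : 1 ≤ j) (hj2 : j ≤ n + 1) :
    ((n+1).choose j : ℝ) * (1 / j) = (n.choose j : ℝ) * (1 / j) + ((n+1).choose j : ℝ) / (n+1) := by
  have key : (n + 1) * ((n+1).choose j) = (n+1) * n.choose j + j * ((n+1).choose j) := by
    obtain ⟨k, rfl⟩ : ∃ k, j = k + 1 := ⟨j - 1, by omega⟩
    have h1 : (n+1).choose (k+1) = n.choose k + n.choose (k+1) := Nat.choose_succ_succ' n k
    have h2 : (n + 1) * n.choose k = (n+1).choose (k+1) * (k+1) := Nat.add_one_mul_choose_eq n k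
    nlinarith [h1, h2]
  have hjR : (j : ℝ) ≠ 0 := by positivity
  have hnR : ((n : ℝ) + 1) ≠ 0 := by positivity
  have keyR : ((n:ℝ) + 1) * ((n+1).choose j : ℝ)
      = ((n:ℝ)+1) * (n.choose j : ℝ) + (j : ℝ) * ((n+1).choose j : ℝ) := by
    exact_mod_cast congrArg (Nat.cast : ℕ → ℝ) key
  field_simp
  nlinarith [keyR]

theorem stmt0 (x : ℝ) (hx : x ∈ Set.Icc (0:ℝ) 1) (n : ℕ) (hn : 1 ≤ n) :
    ∑ j ∈ Finset.Icc 1 n, (n.choose j : ℝ) * (1 / j) * x ^ j * (1 - x) ^ (n - j)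
      = ∑ j ∈ Finset.Icc 1 n, ((1 - x) ^ (n - j) - (1 - x) ^ n) / j := by
  clear hx
  induction n, hn using Nat.le_induction with
  | base => norm_num
  | succ n hn ih =>
    rw [Finset.sum_Icc_succ_top (by omega : 1 ≤ n + 1),
        Finset.sum_Icc_succ_top (by omega : 1 ≤ n + 1)]
    have hLHS : ∀ j ∈ Finset.Icc 1 n,
        ((n+1).choose j : ℝ) * (1 / j) * x ^ j * (1 - x) ^ (n + 1 - j)
          = (1 - x) * ((n.choose j : ℝ) * (1 / j) * x ^ j * (1 - x) ^ (n - j))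
            + ((n+1).choose j : ℝ) * x ^ j * (1 - x) ^ (n + 1 - j) / (n+1) := by
      intro j hj
      obtain ⟨hj1, hj2⟩ := Finset.mem_Icc.mp hj
      have hp : (1 - x) ^ (n + 1 - j) = (1 - x) * (1 - x) ^ (n - j) := by
        rw [show n + 1 - j = (n - j) + 1 by omega]; ring
      rw [aux_choose n j hj1 (by omega)]
      rw [hp]
      push_cast
      ring
    have hRHS : ∀ j ∈ Finset.Icc 1 n,
        ((1 - x) ^ (n + 1 - j) - (1 - x) ^ (n + 1)) / j
          = (1 - x) * (((1 - x) ^ (n - j) - (1 - x) ^ n) / j) := by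
      intro j hj
      obtain ⟨hj1, hj2⟩ := Finset.mem_Icc.mp hj
      have hp : (1 - x) ^ (n + 1 - j) = (1 - x) * (1 - x) ^ (n - j) := by
        rw [show n + 1 - j = (n - j) + 1 by omega]; ring
      rw [hp, pow_succ]
      ring
    rw [Finset.sum_congr rfl hLHS, Finset.sum_congr rfl hRHS,
        Finset.sum_add_distrib, ← Finset.mul_sum, ← Finset.mul_sum, ih]
    have hb : ∑ j ∈ Finset.Icc 1 n, ((n+1).choose j : ℝ) * x ^ j * (1 - x) ^ (n + 1 - j) / (n+1)
        = (1 - (1 - x) ^ (n+1) - ((n+1).choose (n+1) : ℝ) * x ^ (n+1) * (1 - x) ^ (n+1-(n+1))) / (n+1) := by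
      rw [← aux_binom x (n+1), Finset.sum_Icc_succ_top (by omega : 1 ≤ n + 1)]
      rw [← Finset.sum_div]
      congr 1
      ring
    rw [hb]
    simp only [Nat.choose_self, Nat.cast_one, Nat.sub_self, pow_zero, Nat.add_sub_cancel]
    push_cast
    have hnR : ((n : ℝ) + 1) ≠ 0 := by positivity
    field_simp
    ring
end

section
/- With noise Δ ≥ 0, the 2-item identification test success probability equals (2 - (1-Δ)⟨b(ε)⟩)/(2 + 2Δ). In particular it is decreasing in Δ for fixed ⟨b(ε)⟩ < 1, and decreasing in ⟨b(ε)⟩ for fixed Δ < 1. -/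
open MeasureTheory Metric

/-- `f` is absolutely continuous on the interval `[c, d]`. -/
def AbsolutelyContinuousOnIcc (f : ℝ → ℝ) (c d : ℝ) : Prop :=
  ∀ ε > 0, ∃ δ > 0, ∀ (m : ℕ) (a b : Fin m → ℝ),
    (∀ i, c ≤ a i ∧ a i ≤ b i ∧ b i ≤ d) →
    (∀ i j, i ≠ j → Set.Ioo (a i) (b i) ∩ Set.Ioo (a j) (b j) = ∅) →
    (∑ i, (b i - a i)) < δ → (∑ i, |f (b i) - f (a i)|) < ε

/-- The constant similarity function with resolution `ε` and noise `Δ`. -/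
noncomputable def gnoise {M : Type*} [MetricSpace M] (ε Δ : ℝ) (x y : M) : ℝ :=
  if dist x y ≤ ε then 1 else Δ

/-- Probability of correctly identifying the probe when the probe is the first item. -/
noncomputable def idDec {M : Type*} [MetricSpace M] (ε Δ : ℝ) (x₁ x₂ : M) : ℝ :=
  gnoise ε Δ x₁ x₁ / (gnoise ε Δ x₁ x₁ + gnoise ε Δ x₂ x₁)

/-- Identification-test success probability given the two sampled items:
the probe equals `x₁` or `x₂`, each with probability `1/2`. -/
noncomputable def idSucc {M : Type*} [MetricSpace M] (ε Δ : ℝ) (x₁ x₂ : M) : ℝ :=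
  1/2 * idDec ε Δ x₁ x₂ + 1/2 * idDec ε Δ x₂ x₁

/-! The probe is always fully similar to itself, so given the two items the decision is correct
with probability `1/2` when they lie within `ε` of each other and `1/(1+Δ)` otherwise.
Integrating out the second item turns the indicator of that event into the `ε`-ball measure of
the first, so the success probability is affine in `⟨b(ε)⟩`; the closed form and its
monotonicity are then elementary algebra. -/

lemma idSucc_eq_indicator {M : Type*} [MetricSpace M] {ε : ℝ} (hε : 0 ≤ ε) (Δ : ℝ)
    (x₁ x₂ : M) :
    idSucc ε Δ x₁ x₂
      = 1 / (1 + Δ) + (1 / 2 - 1 / (1 + Δ)) * (closedBall x₁ ε).indicator 1 x₂ := by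
  unfold idSucc idDec gnoise
  simp only [dist_self, if_pos hε, dist_comm x₂ x₁]
  by_cases h : dist x₁ x₂ ≤ ε
  · have hmem : x₂ ∈ closedBall x₁ ε := by rwa [mem_closedBall, dist_comm]
    rw [Set.indicator_of_mem hmem, Pi.one_apply, if_pos h]
    ring
  · have hmem : x₂ ∉ closedBall x₁ ε := by rwa [mem_closedBall, dist_comm]
    rw [Set.indicator_of_notMem hmem, if_neg h]
    ring

section BallMeasure

variable {M : Type*} [MetricSpace M] [MeasurableSpace M] (ν : Measure M)

lemma measurable_measure_closedBall [OpensMeasurableSpace M] [SecondCountableTopology M]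
    [SFinite ν] (ε : ℝ) : Measurable fun x => ν (closedBall x ε) :=
  measurable_measure_prodMk_left
    (isClosed_le (continuous_snd.dist continuous_fst) continuous_const).measurableSet

lemma integrable_measureReal_closedBall [OpensMeasurableSpace M] [SecondCountableTopology M]
    [IsFiniteMeasure ν] (ε : ℝ) : Integrable (fun x => ν.real (closedBall x ε)) ν :=
  .of_bound (measurable_measure_closedBall ν ε).ennreal_toReal.aestronglyMeasurable (ν.real .univ)
    (.of_forall fun _ => by
      rw [Real.norm_of_nonneg measureReal_nonneg]
      exact measureReal_mono (Set.subset_univ _))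

lemma integral_integral_idSucc [OpensMeasurableSpace M] [SecondCountableTopology M]
    [IsProbabilityMeasure ν] {ε : ℝ} (hε : 0 ≤ ε) (Δ : ℝ) :
    ∫ x₁, ∫ x₂, idSucc ε Δ x₁ x₂ ∂ν ∂ν
      = 1 / (1 + Δ) + (1 / 2 - 1 / (1 + Δ)) * ∫ p, ν.real (closedBall p ε) ∂ν := by
  have hinner (x₁ : M) : ∫ x₂, idSucc ε Δ x₁ x₂ ∂ν
      = 1 / (1 + Δ) + (1 / 2 - 1 / (1 + Δ)) * ν.real (closedBall x₁ ε) := by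
    simp_rw [idSucc_eq_indicator hε Δ x₁]
    rw [integral_add (integrable_const _)
        ((integrable_const 1).indicator measurableSet_closedBall |>.const_mul _),
      integral_const_mul, integral_indicator_one measurableSet_closedBall]
    simp
  simp_rw [hinner]
  rw [integral_add (integrable_const _) ((integrable_measureReal_closedBall ν ε).const_mul _),
    integral_const_mul]
  simp

end BallMeasure

lemma successProb_strictAntiOn_noise {m : ℝ} (hm : m < 1) :
    StrictAntiOn (fun t : ℝ => (2 - (1 - t) * m) / (2 + 2 * t)) (Set.Ioi (-1)) := by
  intro a (ha : -1 < a) b (hb : -1 < b) hab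
  dsimp only
  rw [div_lt_div_iff₀ (by linarith) (by linarith)]
  nlinarith [mul_pos (sub_pos.2 hab) (sub_pos.2 hm)]

lemma successProb_strictAnti_ballMeasure {t : ℝ} (ht₀ : -1 < t) (ht₁ : t < 1) :
    StrictAnti fun m : ℝ => (2 - (1 - t) * m) / (2 + 2 * t) := by
  intro a b hab
  dsimp only
  rw [div_lt_div_iff_of_pos_right (by linarith)]
  nlinarith

theorem stmt9_general {M : Type*} [MetricSpace M] [MeasurableSpace M] [BorelSpace M]
    [TopologicalSpace.SeparableSpace M]
    (ν : Measure M) [IsProbabilityMeasure ν] (ε Δ : ℝ) (hε : 0 ≤ ε) (hΔ : 0 ≤ Δ) :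
    (∫ x₁, ∫ x₂, idSucc ε Δ x₁ x₂ ∂ν ∂ν
        = (2 - (1 - Δ) * ∫ p, (ν (closedBall p ε)).toReal ∂ν) / (2 + 2 * Δ))
    ∧ (∀ m : ℝ, 0 ≤ m → m < 1 →
        StrictAntiOn (fun t : ℝ => (2 - (1 - t) * m) / (2 + 2 * t)) (Set.Ici 0))
    ∧ (∀ t : ℝ, 0 ≤ t → t < 1 →
        StrictAntiOn (fun m : ℝ => (2 - (1 - t) * m) / (2 + 2 * t)) (Set.Icc 0 1)) := by
  have : SecondCountableTopology M := UniformSpace.secondCountable_of_separable M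
  refine ⟨?_, fun m _ hm => ?_, fun t ht₀ ht₁ => ?_⟩
  · rw [integral_integral_idSucc ν hε Δ]
    have : 1 + Δ ≠ 0 := by positivity
    field_simp
    simp only [measureReal_def]
    ring
  · exact (successProb_strictAntiOn_noise hm).mono fun t (ht : 0 ≤ t) =>
      show -1 < t by linarith
  · exact (successProb_strictAnti_ballMeasure (by linarith) ht₁).strictAntiOn _

theorem stmt9 {M : Type*} [MetricSpace M] [MeasurableSpace M] [BorelSpace M]
    [TopologicalSpace.SeparableSpace M]
    (ν : Measure M) [IsProbabilityMeasure ν] (ε Δ : ℝ) (hε : 0 ≤ ε) (hΔ : 0 ≤ Δ)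
    (hAC : ∀ᵐ p ∂ν, ∀ c d : ℝ, 0 ≤ c →
      AbsolutelyContinuousOnIcc (fun r => (ν (closedBall p r)).toReal) c d) :
    (∫ x₁, ∫ x₂, idSucc ε Δ x₁ x₂ ∂ν ∂ν
        = (2 - (1 - Δ) * ∫ p, (ν (closedBall p ε)).toReal ∂ν) / (2 + 2 * Δ))
    ∧ (∀ m : ℝ, 0 ≤ m → m < 1 →
        StrictAntiOn (fun t : ℝ => (2 - (1 - t) * m) / (2 + 2 * t)) (Set.Ici 0))
    ∧ (∀ t : ℝ, 0 ≤ t → t < 1 →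
        StrictAntiOn (fun m : ℝ => (2 - (1 - t) * m) / (2 + 2 * t)) (Set.Icc 0 1)) :=
  stmt9_general ν ε Δ hε hΔ
end

section
/- In the n-item identification test with noise-free constant similarity of resolution ε on a separable metric probability space with absolutely continuous ball measures, the success probability equals E_{p∼ν}[(1 - (1-b_p(ε))^n)/(n·b_p(ε))] (interpreting the integrand as 1 when b_p(ε) = 0). -/
/-!
Condition on the probe `p = x j`: the other `n - 1` items fall in `B_ε(p)` independently with
probability `b = b_p(ε)`, so the probe is identified with probability `𝔼[1 / (1 + K)]` for
`K ∼ Bin(n - 1, b)`. Writing `1 / (1 + K) = ∫₀¹ t ^ K dt` and using independence,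
`𝔼[t ^ K] = (1 + (t - 1) b) ^ (n - 1)`, whose integral over `[0, 1]` is
`(1 - (1 - b) ^ n) / (n b)`.
-/

open MeasureTheory Metric

/-- Number of items among `x` lying within distance `ε` of the probe `x j`
(each such item has similarity `1` to the probe, the others `0`). -/
noncomputable def simCount {M : Type*} [MetricSpace M] {n : ℕ} (ε : ℝ)
    (x : Fin n → M) (j : Fin n) : ℝ :=
  ∑ i : Fin n, if dist (x i) (x j) ≤ ε then (1 : ℝ) else 0

/-- Identification-test success probability given the `n` sampled items: the probe is one
of them chosen uniformly, and the model answers `i` with probability proportional to the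
similarity of `x i` to the probe (so the probe's index is chosen with probability
`1 / simCount`). -/
noncomputable def idSuccN {M : Type*} [MetricSpace M] {n : ℕ} (ε : ℝ) (x : Fin n → M) : ℝ :=
  (1 / (n : ℝ)) * ∑ j : Fin n, 1 / simCount ε x j

-- `𝔼[1 / (1 + K)]` for `K ∼ Bin(n - 1, b)`; the value `1` at `b = 0` is its limit.
noncomputable def invSuccBinomialMean (n : ℕ) (b : ℝ) : ℝ :=
  if b = 0 then 1 else (1 - (1 - b) ^ n) / (n * b)

theorem integral_one_add_sub_one_mul_pow (b : ℝ) (m : ℕ) :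
    ∫ t in (0 : ℝ)..1, (1 + (t - 1) * b) ^ m = invSuccBinomialMean (m + 1) b := by
  unfold invSuccBinomialMean
  split_ifs with hb
  · simp [hb]
  · have h := intervalIntegral.integral_comp_mul_add (fun x : ℝ => x ^ m) (a := 0) (b := 1) hb
      (1 - b)
    simp only [integral_pow, mul_zero, zero_add, mul_one, add_sub_cancel, smul_eq_mul] at h
    rw [show (fun t : ℝ => (1 + (t - 1) * b) ^ m) = fun t => (b * t + (1 - b)) ^ m by
      funext t; ring, h]
    push_cast
    field_simp
    ring

section CountMem

variable {α ι : Type*} [Fintype ι]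

noncomputable def countMem (s : Set α) (y : ι → α) : ℕ := ∑ i, s.indicator 1 (y i)

theorem pow_countMem (s : Set α) (y : ι → α) (t : ℝ) :
    t ^ countMem s y = ∏ i, (s.indicator (fun _ => t - 1) (y i) + 1) := by
  rw [countMem, ← Finset.prod_pow_eq_pow_sum]
  refine Finset.prod_congr rfl fun i _ => ?_
  by_cases h : y i ∈ s <;> simp [h]

variable [MeasurableSpace α] {s : Set α}

theorem measurable_countMem (hs : MeasurableSet s) : Measurable (countMem s : (ι → α) → ℕ) :=
  Finset.measurable_sum _ fun i _ => (measurable_one.indicator hs).comp (measurable_pi_apply i)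

theorem integral_pow_countMem (μ : Measure α) [IsProbabilityMeasure μ] (hs : MeasurableSet s)
    (t : ℝ) :
    ∫ y, t ^ countMem s y ∂Measure.pi (fun _ : ι => μ)
      = (1 + (t - 1) * μ.real s) ^ Fintype.card ι := by
  simp_rw [pow_countMem,
    integral_fintype_prod_eq_prod (fun _ a => s.indicator (fun _ => t - 1) a + 1)]
  rw [Finset.prod_const, Finset.card_univ]
  congr 1
  rw [integral_add ((integrable_const _).indicator hs) (integrable_const _),
    integral_indicator_const _ hs]
  simp only [smul_eq_mul, integral_const, probReal_univ, mul_one]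
  ring

theorem integral_inv_countMem_add_one (μ : Measure α) [IsProbabilityMeasure μ]
    (hs : MeasurableSet s) :
    ∫ y, ((countMem s y : ℝ) + 1)⁻¹ ∂Measure.pi (fun _ : ι => μ)
      = invSuccBinomialMean (Fintype.card ι + 1) (μ.real s) := by
  have hinv : ∀ k : ℕ, ((k : ℝ) + 1)⁻¹ = ∫ t in (0 : ℝ)..1, t ^ k := by
    intro k
    simp [integral_pow]
  simp_rw [hinv]
  rw [← intervalIntegral_integral_swap]
  · simp_rw [integral_pow_countMem μ hs]
    exact integral_one_add_sub_one_mul_pow _ _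
  · have : IsFiniteMeasure (volume.restrict (Set.uIoc (0 : ℝ) 1)) :=
      isFiniteMeasure_restrict.2 measure_Ioc_lt_top.ne
    refine (integrable_const (1 : ℝ)).mono' ?_ ?_
    · exact (measurable_fst.pow
        ((measurable_countMem hs).comp measurable_snd)).aestronglyMeasurable
    · have hmem : ∀ᵐ z ∂(volume.restrict (Set.uIoc (0 : ℝ) 1)).prod (Measure.pi fun _ : ι => μ),
          z.1 ∈ Set.uIoc (0 : ℝ) 1 :=
        Measure.quasiMeasurePreserving_fst.ae (ae_restrict_mem measurableSet_uIoc)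
      filter_upwards [hmem] with z hz
      rw [Set.uIoc_of_le zero_le_one] at hz
      simp only [Function.uncurry, Real.norm_eq_abs, abs_pow, abs_of_pos hz.1]
      exact pow_le_one₀ hz.1.le hz.2

end CountMem

section Identification

variable {M : Type*} [MetricSpace M]

theorem simCount_insertNth {ε : ℝ} (hε : 0 ≤ ε) {m : ℕ} (j : Fin (m + 1)) (p : M)
    (y : Fin m → M) :
    simCount ε (Fin.insertNth j p y) j = countMem (closedBall p ε) y + 1 := by
  rw [simCount, Fin.sum_univ_succAbove _ j, countMem, add_comm]
  simp only [Fin.insertNth_apply_same, Fin.insertNth_apply_succAbove, dist_self, hε, if_true,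
    Nat.cast_sum]
  congr 1
  refine Finset.sum_congr rfl fun i _ => ?_
  by_cases h : dist (y i) p ≤ ε <;> simp [h]

theorem one_le_simCount {ε : ℝ} (hε : 0 ≤ ε) {n : ℕ} (x : Fin n → M) (j : Fin n) :
    1 ≤ simCount ε x j := by
  calc (1 : ℝ) = if dist (x j) (x j) ≤ ε then 1 else 0 := by simp [hε]
    _ ≤ simCount ε x j :=
      Finset.single_le_sum (f := fun i => if dist (x i) (x j) ≤ ε then (1 : ℝ) else 0)
        (fun i _ => by split_ifs <;> norm_num) (Finset.mem_univ j)

variable [MeasurableSpace M] [BorelSpace M] [SecondCountableTopology M]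

theorem measurable_simCount (ε : ℝ) {n : ℕ} (j : Fin n) :
    Measurable fun x : Fin n → M => simCount ε x j :=
  Finset.measurable_sum _ fun i _ =>
    Measurable.ite (measurableSet_le (by fun_prop) measurable_const) measurable_const
      measurable_const

theorem measurable_countMem_closedBall (ε : ℝ) {ι : Type*} [Fintype ι] :
    Measurable fun z : M × (ι → M) => countMem (closedBall z.1 ε) z.2 :=
  Finset.measurable_sum _ fun i _ =>
    measurable_one.indicator (measurableSet_le (by fun_prop) measurable_const :
      MeasurableSet {z : M × (ι → M) | dist (z.2 i) z.1 ≤ ε})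

variable (ν : Measure M) [IsProbabilityMeasure ν]

theorem integrable_inv_simCount {ε : ℝ} (hε : 0 ≤ ε) {n : ℕ} (j : Fin n) :
    Integrable (fun x => (simCount ε x j)⁻¹) (Measure.pi fun _ : Fin n => ν) := by
  refine (integrable_const (1 : ℝ)).mono' (measurable_simCount ε j).inv.aestronglyMeasurable
    (ae_of_all _ fun x => ?_)
  have := one_le_simCount hε x j
  rw [Real.norm_eq_abs, abs_of_pos (inv_pos.2 (by linarith))]
  exact inv_le_one_of_one_le₀ this

theorem integral_inv_simCount {ε : ℝ} (hε : 0 ≤ ε) {m : ℕ} (j : Fin (m + 1)) :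
    ∫ x, (simCount ε x j)⁻¹ ∂(Measure.pi fun _ : Fin (m + 1) => ν)
      = ∫ p, invSuccBinomialMean (m + 1) (ν.real (closedBall p ε)) ∂ν := by
  rw [← ((measurePreserving_piFinSuccAbove (fun _ => ν) j).symm _).integral_comp']
  have hsplit : ∀ z : M × (Fin m → M),
      (simCount ε ((MeasurableEquiv.piFinSuccAbove (fun _ => M) j).symm z) j)⁻¹
        = ((countMem (closedBall z.1 ε) z.2 : ℝ) + 1)⁻¹ :=
    fun z => congrArg Inv.inv (simCount_insertNth hε j z.1 z.2)
  simp_rw [hsplit]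
  rw [integral_prod]
  · simp_rw [integral_inv_countMem_add_one ν measurableSet_closedBall, Fintype.card_fin]
  · refine (integrable_const (1 : ℝ)).mono' ?_ (ae_of_all _ fun z => ?_)
    · exact ((measurable_from_top (f := fun k : ℕ => ((k : ℝ) + 1)⁻¹)).comp
        (measurable_countMem_closedBall ε)).aestronglyMeasurable
    · rw [Real.norm_eq_abs, abs_of_pos (by positivity)]
      exact inv_le_one_of_one_le₀ (by simp)

end Identification

theorem stmt10_general {M : Type*} [MetricSpace M] [MeasurableSpace M] [BorelSpace M]
    [TopologicalSpace.SeparableSpace M]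
    (ν : Measure M) [IsProbabilityMeasure ν] (n : ℕ) (hn : 1 ≤ n) (ε : ℝ) (hε : 0 ≤ ε) :
    ∫ x, idSuccN ε x ∂(Measure.pi fun _ : Fin n => ν)
      = ∫ p, (if (ν (closedBall p ε)).toReal = 0 then 1
          else (1 - (1 - (ν (closedBall p ε)).toReal) ^ n)
            / ((n : ℝ) * (ν (closedBall p ε)).toReal)) ∂ν := by
  have := UniformSpace.secondCountable_of_separable M
  obtain ⟨m, rfl⟩ := Nat.exists_eq_add_of_le' hn
  simp_rw [idSuccN, one_div]
  rw [integral_const_mul, integral_finsetSum _ fun j _ => integrable_inv_simCount ν hε j]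
  simp_rw [integral_inv_simCount ν hε]
  rw [Finset.sum_const, Finset.card_univ, Fintype.card_fin, nsmul_eq_mul,
    inv_mul_cancel_left₀ (by positivity)]
  rfl

theorem stmt10 {M : Type*} [MetricSpace M] [MeasurableSpace M] [BorelSpace M]
    [TopologicalSpace.SeparableSpace M]
    (ν : Measure M) [IsProbabilityMeasure ν] (n : ℕ) (hn : 1 ≤ n) (ε : ℝ) (hε : 0 ≤ ε)
    (hAC : ∀ᵐ p ∂ν, ∀ c d : ℝ, 0 ≤ c →
      AbsolutelyContinuousOnIcc (fun r => (ν (closedBall p r)).toReal) c d) :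
    ∫ x, idSuccN ε x ∂(Measure.pi fun _ : Fin n => ν)
      = ∫ p, (if (ν (closedBall p ε)).toReal = 0 then 1
          else (1 - (1 - (ν (closedBall p ε)).toReal) ^ n)
            / ((n : ℝ) * (ν (closedBall p ε)).toReal)) ∂ν :=
  stmt10_general ν n hn ε hε
end
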